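/- arXiv:2205.12622 — 5 statements merged into one kernel-verified Lean document; each statement's English description precedes it below -/
import Mathlib

section
/- Let μ be a finite positive Borel measure on [0,1) and s > 0. If μ is an s-Carleson measure, i.e. sup_{t∈[0,1)} μ([t,1))/(1-t)^s < ∞, then the sequence of moments μ_n = ∫_{[0,1)} t^n dμ(t) satisfies sup_{n≥0} (1+n)^s μ_n < ∞. -/
open MeasureTheory Set

/-! By the layer-cake formula, `μ_n = ∫₀¹ μ {a ∈ [0,1) | λ < a ^ n} dλ`. That level set lies in
`[λ^(1/n), 1)`, so the Carleson condition bounds its measure by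
`C (1 - λ^(1/n))^s ≤ C (log (1/λ) / n)^s ≤ C (2s)^s n^(-s) λ^(-1/2)`, and `λ^(-1/2)` is integrable
on `(0, 1]`. Hence `μ_n ≤ 2 C (2s)^s n^(-s)`. -/

lemma Real.rpow_le_mul_exp_half {s x : ℝ} (hs : 0 < s) (hx : 0 ≤ x) :
    x ^ s ≤ (2 * s) ^ s * Real.exp (x / 2) := by
  have h2s : 0 < 2 * s := by positivity
  have hu : 0 ≤ x / (2 * s) := div_nonneg hx h2s.le
  calc x ^ s = (2 * s) ^ s * (x / (2 * s)) ^ s := by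
        rw [← Real.mul_rpow h2s.le hu, mul_div_cancel₀ _ h2s.ne']
    _ ≤ (2 * s) ^ s * Real.exp (x / (2 * s)) ^ s := by
        gcongr
        linarith [Real.add_one_le_exp (x / (2 * s))]
    _ = (2 * s) ^ s * Real.exp (x / 2) := by
        rw [← Real.exp_mul]
        field_simp

lemma Real.one_sub_rpow_le_neg_mul_log {t : ℝ} (ht : 0 < t) (r : ℝ) :
    1 - t ^ r ≤ -(r * Real.log t) := by
  rw [Real.rpow_def_of_pos ht]
  linarith [Real.add_one_le_exp (Real.log t * r)]

lemma Real.one_sub_rpow_rpow_le {r s t : ℝ} (hr : 0 ≤ r) (hs : 0 < s) (ht₀ : 0 < t)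
    (ht₁ : t ≤ 1) : (1 - t ^ r) ^ s ≤ (2 * s) ^ s * r ^ s * t ^ (-(1 / 2 : ℝ)) := by
  have hlog : 0 ≤ -Real.log t := neg_nonneg.mpr (Real.log_nonpos ht₀.le ht₁)
  calc (1 - t ^ r) ^ s ≤ (r * -Real.log t) ^ s := by
        gcongr
        · linarith [Real.rpow_le_one ht₀.le ht₁ hr]
        · linarith [one_sub_rpow_le_neg_mul_log ht₀ r]
    _ = r ^ s * (-Real.log t) ^ s := Real.mul_rpow hr hlog
    _ ≤ r ^ s * ((2 * s) ^ s * Real.exp (-Real.log t / 2)) := by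
        gcongr
        exact rpow_le_mul_exp_half hs hlog
    _ = (2 * s) ^ s * r ^ s * t ^ (-(1 / 2 : ℝ)) := by
        rw [Real.rpow_def_of_pos ht₀]
        ring_nf

lemma lintegral_Ioc_zero_one_ofReal_mul_rpow {c r : ℝ} (hc : 0 ≤ c) (hr : -1 < r) :
    ∫⁻ t in Ioc (0 : ℝ) 1, ENNReal.ofReal (c * t ^ r) = ENNReal.ofReal (c / (r + 1)) := by
  rw [← ofReal_integral_eq_lintegral_ofReal, integral_const_mul,
    ← intervalIntegral.integral_of_le zero_le_one, integral_rpow (Or.inl hr), Real.one_rpow,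
    Real.zero_rpow (by linarith), sub_zero, mul_one_div]
  · exact (intervalIntegral.intervalIntegrable_rpow' hr).1.const_mul c
  · filter_upwards [ae_restrict_mem measurableSet_Ioc] with t ht
    have := ht.1
    positivity

lemma setOf_lt_pow_inter_Ico_subset {n : ℕ} (hn : n ≠ 0) {t : ℝ} (ht : 0 ≤ t) :
    {a : ℝ | t < a ^ n} ∩ Ico 0 1 ⊆ Ico (t ^ (n⁻¹ : ℝ)) 1 := by
  rintro a ⟨hta : t < a ^ n, ha₀, ha₁⟩
  refine ⟨le_of_not_gt fun hlt => hta.not_ge ?_, ha₁⟩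
  calc a ^ n ≤ (t ^ (n⁻¹ : ℝ)) ^ n := by gcongr
    _ = t := Real.rpow_inv_natCast_pow ht hn

def IsCarlesonWith (μ : Measure ℝ) (s C : ℝ) : Prop :=
  ∀ t ∈ Ico (0 : ℝ) 1, (μ (Ico t 1)).toReal ≤ C * (1 - t) ^ s

namespace IsCarlesonWith

variable {μ : Measure ℝ} {s C : ℝ}

lemma nonneg (hcar : IsCarlesonWith μ s C) : 0 ≤ C := by
  simpa using ENNReal.toReal_nonneg.trans (hcar 0 ⟨le_rfl, one_pos⟩)

variable [IsFiniteMeasure μ]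

lemma measure_Ico_rpow_inv_le (hcar : IsCarlesonWith μ s C) (hs : 0 < s) {n : ℕ} (hn : n ≠ 0)
    {t : ℝ} (ht₀ : 0 < t) (ht₁ : t ≤ 1) :
    μ (Ico (t ^ (n⁻¹ : ℝ)) 1) ≤
      ENNReal.ofReal (C * (2 * s) ^ s * (n⁻¹ : ℝ) ^ s * t ^ (-(1 / 2 : ℝ))) := by
  rcases ht₁.lt_or_eq with ht₁ | rfl
  · have hroot : t ^ (n⁻¹ : ℝ) ∈ Ico (0 : ℝ) 1 :=
      ⟨by positivity, Real.rpow_lt_one ht₀.le ht₁ (by positivity [Nat.pos_of_ne_zero hn])⟩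
    rw [← ENNReal.ofReal_toReal (measure_ne_top μ _)]
    refine ENNReal.ofReal_le_ofReal ((hcar _ hroot).trans ?_)
    calc C * (1 - t ^ (n⁻¹ : ℝ)) ^ s
        ≤ C * ((2 * s) ^ s * (n⁻¹ : ℝ) ^ s * t ^ (-(1 / 2 : ℝ))) :=
          mul_le_mul_of_nonneg_left (Real.one_sub_rpow_rpow_le (by positivity) hs ht₀ ht₁.le)
            hcar.nonneg
      _ = _ := by ring
  · simp

lemma setIntegral_Ico_pow_le (hcar : IsCarlesonWith μ s C) (hs : 0 < s) {n : ℕ} (hn : n ≠ 0) :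
    ∫ t in Ico (0 : ℝ) 1, t ^ n ∂μ ≤ 2 * C * (2 * s) ^ s * (n⁻¹ : ℝ) ^ s := by
  set K := C * (2 * s) ^ s * (n⁻¹ : ℝ) ^ s
  have hK : 0 ≤ K := by have := hcar.nonneg; positivity
  have hpow_nonneg : 0 ≤ᵐ[μ.restrict (Ico 0 1)] fun t : ℝ => t ^ n := by
    filter_upwards [ae_restrict_mem measurableSet_Ico] with t ht using pow_nonneg ht.1 n
  have hlevel : ∀ t ∈ Ioi (0 : ℝ), μ.restrict (Ico 0 1) {a | t < a ^ n} ≤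
      (Ioc 0 1).indicator (fun t => ENNReal.ofReal (K * t ^ (-(1 / 2 : ℝ)))) t := by
    intro t ht
    rw [Measure.restrict_apply' measurableSet_Ico]
    refine (measure_mono (setOf_lt_pow_inter_Ico_subset hn (le_of_lt ht))).trans ?_
    by_cases ht₁ : t ≤ 1
    · rw [indicator_of_mem (show t ∈ Ioc 0 1 from ⟨ht, ht₁⟩)]
      exact hcar.measure_Ico_rpow_inv_le hs hn ht ht₁
    · have hroot : 1 ≤ t ^ (n⁻¹ : ℝ) := Real.one_le_rpow (not_le.mp ht₁).le (by positivity)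
      simp [Ico_eq_empty_of_le hroot]
  have hlintegral : ∫⁻ t in Ico 0 1, ENNReal.ofReal (t ^ n) ∂μ ≤ ENNReal.ofReal (2 * K) :=
    calc ∫⁻ t in Ico 0 1, ENNReal.ofReal (t ^ n) ∂μ
        = ∫⁻ t in Ioi 0, μ.restrict (Ico 0 1) {a | t < a ^ n} :=
          lintegral_eq_lintegral_meas_lt _ hpow_nonneg (by fun_prop)
      _ ≤ ∫⁻ t in Ioi 0,
            (Ioc 0 1).indicator (fun t => ENNReal.ofReal (K * t ^ (-(1 / 2 : ℝ)))) t :=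
          setLIntegral_mono' measurableSet_Ioi hlevel
      _ ≤ ∫⁻ t in Ioc 0 1, ENNReal.ofReal (K * t ^ (-(1 / 2 : ℝ))) :=
          (setLIntegral_le_lintegral _ _).trans_eq (lintegral_indicator measurableSet_Ioc _)
      _ = ENNReal.ofReal (2 * K) := by
          rw [lintegral_Ioc_zero_one_ofReal_mul_rpow hK (by norm_num)]
          congr 1
          ring
  rw [integral_eq_lintegral_of_nonneg_ae hpow_nonneg (by fun_prop)]
  exact ENNReal.toReal_le_of_le_ofReal (by positivity) hlintegral |>.trans_eq (by ring)

end IsCarlesonWith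

theorem moments_of_carleson (μ : Measure ℝ) [IsFiniteMeasure μ] (s : ℝ) (hs : 0 < s)
    (hcar : ∃ C : ℝ, ∀ t ∈ Set.Ico (0:ℝ) 1, (μ (Set.Ico t 1)).toReal ≤ C * (1 - t) ^ s) :
    ∃ C : ℝ, ∀ n : ℕ, ((1:ℝ) + n) ^ s * (∫ t in Set.Ico (0:ℝ) 1, t ^ n ∂μ) ≤ C := by
  obtain ⟨C, hC⟩ : ∃ C, IsCarlesonWith μ s C := hcar
  have hC₀ : 0 ≤ C := hC.nonneg
  refine ⟨max C (2 * C * (4 * s) ^ s), fun n => ?_⟩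
  rcases Nat.eq_zero_or_pos n with rfl | hn
  · simpa [measureReal_def] using (hC 0 ⟨le_rfl, one_pos⟩).trans (le_max_left _ _)
  have hratio : ((1 : ℝ) + n) * (n : ℝ)⁻¹ ≤ 2 := by
    have : (1 : ℝ) ≤ n := Nat.one_le_cast.mpr hn
    rw [mul_inv_le_iff₀ (by positivity)]
    linarith
  calc ((1 : ℝ) + n) ^ s * ∫ t in Ico (0 : ℝ) 1, t ^ n ∂μ
      ≤ ((1 : ℝ) + n) ^ s * (2 * C * (2 * s) ^ s * (n⁻¹ : ℝ) ^ s) := by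
        gcongr
        exact hC.setIntegral_Ico_pow_le hs hn.ne'
    _ = 2 * C * (2 * s) ^ s * (((1 : ℝ) + n) * (n : ℝ)⁻¹) ^ s := by
        rw [Real.mul_rpow (x := 1 + n) (by positivity) (by positivity)]
        ring
    _ ≤ 2 * C * ((2 * s) ^ s * 2 ^ s) := by
        rw [← mul_assoc]
        gcongr
    _ = 2 * C * (4 * s) ^ s := by
        rw [← Real.mul_rpow (by positivity) (by positivity)]
        ring_nf
    _ ≤ max C (2 * C * (4 * s) ^ s) := le_max_right _ _
end

section
/- Let μ be a finite positive Borel measure on [0,1) and s > 0. If the sequence of moments μ_n = ∫_{[0,1)} t^n dμ(t) satisfies sup_{n≥0} (1+n)^s μ_n < ∞, then μ is an s-Carleson measure, i.e. sup_{t∈[0,1)} μ([t,1))/(1-t)^s < ∞. -/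
/-!
Markov's inequality gives `t ^ n * μ [t, 1) ≤ μ_n`. Taking `n = ⌊1 / (2 (1 - t))⌋`, Bernoulli's
inequality gives `t ^ n ≥ 1 / 2`, while `(1 + n) (1 - t) ≥ 1 / 2`; hence
`μ [t, 1) ≤ 2 μ_n ≤ 2 C (1 + n) ^ (-s) ≤ 2 C (2 (1 - t)) ^ s`.
-/

open MeasureTheory Set

lemma pow_mul_measureReal_Ico_le_setIntegral_pow (μ : Measure ℝ) [IsLocallyFiniteMeasure μ]
    {t : ℝ} (ht : 0 ≤ t) (n : ℕ) :
    t ^ n * μ.real (Ico t 1) ≤ ∫ x in Ico 0 1, x ^ n ∂μ := by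
  have hint : IntegrableOn (fun x : ℝ => x ^ n) (Ico 0 1) μ :=
    (continuous_pow n).integrableOn_Icc.mono_set Ico_subset_Icc_self
  have hsub : Ico t 1 ⊆ Ico 0 1 := Ico_subset_Ico_left ht
  calc t ^ n * μ.real (Ico t 1) = ∫ _ in Ico t 1, t ^ n ∂μ := by
        rw [setIntegral_const, smul_eq_mul, mul_comm]
    _ ≤ ∫ x in Ico t 1, x ^ n ∂μ :=
        setIntegral_mono_on (integrableOn_const measure_Ico_lt_top.ne) (hint.mono_set hsub)
          measurableSet_Ico fun x hx => pow_le_pow_left₀ ht hx.1 n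
    _ ≤ ∫ x in Ico 0 1, x ^ n ∂μ := by
        refine setIntegral_mono_set hint ?_ hsub.eventuallyLE
        filter_upwards [ae_restrict_mem measurableSet_Ico] with x hx
        exact pow_nonneg hx.1 n

lemma exists_half_le_pow_and_one_le_two_mul_sub_mul {t : ℝ} (ht₀ : 0 ≤ t) (ht₁ : t < 1) :
    ∃ n : ℕ, 1 / 2 ≤ t ^ n ∧ 1 ≤ (1 + n) * (2 * (1 - t)) := by
  have h1t : 0 < 2 * (1 - t) := by linarith
  set n := ⌊1 / (2 * (1 - t))⌋₊
  have hn_le : (n : ℝ) * (2 * (1 - t)) ≤ 1 :=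
    (le_div_iff₀ h1t).1 (Nat.floor_le (one_div_pos.2 h1t).le)
  have hn_gt : 1 < ((n : ℝ) + 1) * (2 * (1 - t)) :=
    (div_lt_iff₀ h1t).1 (Nat.lt_floor_add_one _)
  have hbernoulli : 1 + n * (t - 1) ≤ t ^ n := by
    simpa using one_add_mul_le_pow (show (-2 : ℝ) ≤ t - 1 by linarith) n
  exact ⟨n, by linarith, by linarith⟩

lemma le_mul_rpow_of_rpow_mul_le {a C N x s : ℝ} (ha : 0 ≤ a) (hN : 0 ≤ N) (hx : 0 ≤ x)
    (hs : 0 ≤ s) (hNx : 1 ≤ N * x) (h : N ^ s * a ≤ C) : a ≤ C * x ^ s := by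
  calc a = 1 * a := (one_mul a).symm
    _ ≤ (N * x) ^ s * a := mul_le_mul_of_nonneg_right (Real.one_le_rpow hNx hs) ha
    _ = N ^ s * a * x ^ s := by rw [Real.mul_rpow hN hx]; ring
    _ ≤ C * x ^ s := mul_le_mul_of_nonneg_right h (Real.rpow_nonneg hx s)

theorem carleson_of_moments (μ : Measure ℝ) [IsFiniteMeasure μ] (s : ℝ) (hs : 0 < s)
    (hmom : ∃ C : ℝ, ∀ n : ℕ, ((1:ℝ) + n) ^ s * (∫ t in Set.Ico (0:ℝ) 1, t ^ n ∂μ) ≤ C) :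
    ∃ C : ℝ, ∀ t ∈ Set.Ico (0:ℝ) 1, (μ (Set.Ico t 1)).toReal ≤ C * (1 - t) ^ s := by
  obtain ⟨C, hC⟩ := hmom
  refine ⟨2 * C * 2 ^ s, fun t ⟨ht₀, ht₁⟩ => ?_⟩
  obtain ⟨n, hpow, hn⟩ := exists_half_le_pow_and_one_le_two_mul_sub_mul ht₀ ht₁
  have hmarkov := pow_mul_measureReal_Ico_le_setIntegral_pow μ ht₀ n
  have hmoment : ∫ x in Ico 0 1, x ^ n ∂μ ≤ C * (2 * (1 - t)) ^ s :=
    le_mul_rpow_of_rpow_mul_le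
      (setIntegral_nonneg measurableSet_Ico fun x hx => pow_nonneg hx.1 n)
      (by positivity) (by linarith) hs.le hn (hC n)
  have hμ : 0 ≤ μ.real (Ico t 1) := measureReal_nonneg
  calc μ.real (Ico t 1) ≤ 2 * (t ^ n * μ.real (Ico t 1)) := by nlinarith
    _ ≤ 2 * (C * (2 * (1 - t)) ^ s) := by linarith
    _ = 2 * C * 2 ^ s * (1 - t) ^ s := by
        rw [Real.mul_rpow zero_le_two (by linarith)]; ring
end

section
/- Let 0 < t < ∞, 0 ≤ r < s < ∞ and let μ be a finite positive Borel measure on [0,1). If μ is an s-Carleson measure, then sup_{a∈D} ∫_{[0,1)} (1-|a|)^t / ((1-x)^r (1-|a|x)^{s+t-r}) dμ(x) < ∞, where the supremum is over the open unit disc D. -/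
open MeasureTheory Set Metric Complex

private lemma rpow_helper {δ : ℝ} (hδ : 0 < δ) (u v p σ C : ℝ) :
    (δ * 2 ^ u) ^ p * (C * (δ * 2 ^ v) ^ σ) = C * (δ ^ (p + σ) * 2 ^ (u * p + v * σ)) := by
  rw [Real.mul_rpow hδ.le (Real.rpow_nonneg (by norm_num) _),
      Real.mul_rpow hδ.le (Real.rpow_nonneg (by norm_num) _),
      ← Real.rpow_mul (by norm_num : (0:ℝ) ≤ 2),
      ← Real.rpow_mul (by norm_num : (0:ℝ) ≤ 2),
      Real.rpow_add hδ, Real.rpow_add (by norm_num : (0:ℝ) < 2)]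
  ring

private lemma tsum_ofReal_geom {K q : ℝ} (hK : 0 ≤ K) (hq0 : 0 ≤ q) (hq1 : q < 1) :
    ∑' n : ℕ, ENNReal.ofReal (K * q ^ n) = ENNReal.ofReal (K * (1 - q)⁻¹) := by
  rw [← tsum_geometric_of_lt_one hq0 hq1, ← tsum_mul_left,
    ENNReal.ofReal_tsum_of_nonneg (fun n => by positivity)
      ((summable_geometric_of_lt_one hq0 hq1).mul_left K)]

/-- Dyadic tail estimate: `∫_{[b,1)} (1-x)^{-r} dμ ≲ (1-b)^{s-r}` for an s-Carleson measure. -/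
private lemma lemA (ν : Measure ℝ) {C s r : ℝ} (hC : 0 ≤ C) (hr : 0 ≤ r) (hrs : r < s)
    (hM : ∀ y : ℝ, 0 < y → ν (Set.Ici (1 - y)) ≤ ENNReal.ofReal (C * y ^ s))
    {b : ℝ} (hb1 : b < 1) :
    ∫⁻ x in Set.Ico b 1, ENNReal.ofReal ((1 - x) ^ (-r)) ∂ν ≤
      ENNReal.ofReal ((C * 2 ^ r * (1 - 2 ^ (r - s))⁻¹) * (1 - b) ^ (s - r)) := by
  classical
  set δ := 1 - b with hδdef
  have hδ : 0 < δ := by simp [hδdef]; linarith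
  set A : ℕ → Set ℝ := fun n => Set.Ico (1 - δ * 2 ^ (-(n:ℝ))) (1 - δ * 2 ^ (-(n:ℝ) - 1)) with hA
  set q : ℝ := 2 ^ (r - s) with hq
  have hq0 : 0 ≤ q := Real.rpow_nonneg (by norm_num) _
  have hq1 : q < 1 := Real.rpow_lt_one_of_one_lt_of_neg (by norm_num) (by linarith)
  set K : ℝ := C * 2 ^ r * δ ^ (s - r) with hK
  have hKnn : 0 ≤ K := by positivity
  have hcov : Set.Ico b 1 ⊆ ⋃ n : ℕ, A n := by
    rintro x ⟨hx1, hx2⟩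
    have h1x : 0 < 1 - x := by linarith
    have hle : 1 - x ≤ δ := by simp [hδdef]; linarith
    have hP : ∃ n : ℕ, δ * 2 ^ (-(n:ℝ) - 1) < 1 - x := by
      obtain ⟨m, hm⟩ := pow_unbounded_of_one_lt (δ / (1 - x)) (one_lt_two (α := ℝ))
      refine ⟨m, ?_⟩
      have h2m : (2:ℝ) ^ (-(m:ℝ) - 1) ≤ ((2:ℝ) ^ m)⁻¹ := by
        rw [← Real.rpow_natCast 2 m, ← Real.rpow_neg (by norm_num)]
        exact Real.rpow_le_rpow_of_exponent_le one_le_two (by linarith)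
      have h1 : δ * ((2:ℝ) ^ m)⁻¹ < 1 - x := by
        rw [← div_eq_mul_inv, div_lt_iff₀ (by positivity)]
        rw [div_lt_iff₀ h1x] at hm
        linarith [hm]
      calc δ * 2 ^ (-(m:ℝ) - 1) ≤ δ * ((2:ℝ) ^ m)⁻¹ :=
            mul_le_mul_of_nonneg_left h2m hδ.le
        _ < 1 - x := h1
    set n := Nat.find hP with hn
    have hspec : δ * 2 ^ (-(n:ℝ) - 1) < 1 - x := Nat.find_spec hP
    have hupper : 1 - x ≤ δ * 2 ^ (-(n:ℝ)) := by
      rcases Nat.eq_zero_or_pos n with h0 | hpos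
      · rw [h0]; norm_num
        simpa using hle
      · obtain ⟨k, hk⟩ := Nat.exists_eq_succ_of_ne_zero hpos.ne'
        have hmin := Nat.find_min hP (by omega : k < n)
        push_neg at hmin
        have : -(n:ℝ) = -(k:ℝ) - 1 := by rw [hk]; push_cast; ring
        rw [this]
        exact hmin
    exact Set.mem_iUnion.2 ⟨n, by constructor <;> [linarith; linarith]⟩
  calc ∫⁻ x in Set.Ico b 1, ENNReal.ofReal ((1 - x) ^ (-r)) ∂ν
      ≤ ∫⁻ x in ⋃ n : ℕ, A n, ENNReal.ofReal ((1 - x) ^ (-r)) ∂ν := lintegral_mono_set hcov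
    _ ≤ ∑' n : ℕ, ∫⁻ x in A n, ENNReal.ofReal ((1 - x) ^ (-r)) ∂ν := lintegral_iUnion_le _ _
    _ ≤ ∑' n : ℕ, ENNReal.ofReal (K * q ^ n) := by
        refine ENNReal.tsum_le_tsum fun n => ?_
        have hpos : (0:ℝ) < δ * 2 ^ (-(n:ℝ) - 1) := by positivity
        have step1 : ∫⁻ x in A n, ENNReal.ofReal ((1 - x) ^ (-r)) ∂ν ≤
            ∫⁻ _ in A n, ENNReal.ofReal ((δ * 2 ^ (-(n:ℝ) - 1)) ^ (-r)) ∂ν := by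
          refine setLIntegral_mono' measurableSet_Ico fun x hx => ?_
          refine ENNReal.ofReal_le_ofReal ?_
          exact Real.rpow_le_rpow_of_nonpos hpos (by have := hx.2; simp only [hA] at hx; linarith [hx.2]) (by linarith)
        have step2 : ν (A n) ≤ ENNReal.ofReal (C * (δ * 2 ^ (-(n:ℝ))) ^ s) := by
          exact le_trans (measure_mono fun x hx => hx.1) (hM _ (by positivity))
        calc ∫⁻ x in A n, ENNReal.ofReal ((1 - x) ^ (-r)) ∂ν
            ≤ ∫⁻ _ in A n, ENNReal.ofReal ((δ * 2 ^ (-(n:ℝ) - 1)) ^ (-r)) ∂ν := step1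
          _ = ENNReal.ofReal ((δ * 2 ^ (-(n:ℝ) - 1)) ^ (-r)) * ν (A n) := setLIntegral_const _ _
          _ ≤ ENNReal.ofReal ((δ * 2 ^ (-(n:ℝ) - 1)) ^ (-r)) *
              ENNReal.ofReal (C * (δ * 2 ^ (-(n:ℝ))) ^ s) := mul_le_mul_right step2 _
          _ = ENNReal.ofReal ((δ * 2 ^ (-(n:ℝ) - 1)) ^ (-r) * (C * (δ * 2 ^ (-(n:ℝ))) ^ s)) :=
              (ENNReal.ofReal_mul (Real.rpow_nonneg hpos.le _)).symm
          _ = ENNReal.ofReal (K * q ^ n) := by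
              rw [rpow_helper hδ]
              congr 1
              rw [hK, hq, ← Real.rpow_natCast ((2:ℝ) ^ (r - s)) n,
                ← Real.rpow_mul (by norm_num : (0:ℝ) ≤ 2),
                show (-(n:ℝ) - 1) * (-r) + (-(n:ℝ)) * s = r + (r - s) * n by ring,
                Real.rpow_add (by norm_num : (0:ℝ) < 2),
                show (-r) + s = s - r by ring]
              ring
    _ = ENNReal.ofReal (K * (1 - q)⁻¹) := tsum_ofReal_geom hKnn hq0 hq1
    _ = ENNReal.ofReal ((C * 2 ^ r * (1 - 2 ^ (r - s))⁻¹) * (1 - b) ^ (s - r)) := by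
        rw [hK, hq, ← hδdef]; congr 1; ring


private lemma measureM (μ : Measure ℝ) [IsFiniteMeasure μ] {C s : ℝ} (hC : 0 ≤ C) (hs : 0 ≤ s)
    (hcar : ∀ x ∈ Set.Ico (0:ℝ) 1, (μ (Set.Ico x 1)).toReal ≤ C * (1 - x) ^ s)
    {y : ℝ} (hy : 0 < y) :
    (μ.restrict (Set.Ico (0:ℝ) 1)) (Set.Ici (1 - y)) ≤ ENNReal.ofReal (C * y ^ s) := by
  set u := max (1 - y) 0 with hu
  have hu0 : 0 ≤ u := le_max_right _ _
  have hu1 : u < 1 := max_lt (by linarith) one_pos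
  have hsub : Set.Ici (1 - y) ∩ Set.Ico (0:ℝ) 1 ⊆ Set.Ico u 1 := by
    rintro x ⟨hx1, hx2, hx3⟩
    exact ⟨max_le hx1 hx2, hx3⟩
  calc (μ.restrict (Set.Ico (0:ℝ) 1)) (Set.Ici (1 - y))
      = μ (Set.Ici (1 - y) ∩ Set.Ico (0:ℝ) 1) := Measure.restrict_apply measurableSet_Ici
    _ ≤ μ (Set.Ico u 1) := measure_mono hsub
    _ ≤ ENNReal.ofReal (C * (1 - u) ^ s) := by
        rw [← ENNReal.ofReal_toReal (measure_ne_top μ _)]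
        exact ENNReal.ofReal_le_ofReal (hcar u ⟨hu0, hu1⟩)
    _ ≤ ENNReal.ofReal (C * y ^ s) := by
        apply ENNReal.ofReal_le_ofReal
        apply mul_le_mul_of_nonneg_left _ hC
        exact Real.rpow_le_rpow (by linarith) (by have := le_max_left (1 - y) (0:ℝ); simp only [hu]; linarith) hs

private lemma lemB (ν : Measure ℝ) {C s t : ℝ} (hC : 0 ≤ C) (hs : 0 < s) (ht : 0 < t)
    (hM : ∀ y : ℝ, 0 < y → ν (Set.Ici (1 - y)) ≤ ENNReal.ofReal (C * y ^ s))
    {b : ℝ} (hb1 : b < 1) :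
    ∫⁻ x in Set.Ico 0 b, ENNReal.ofReal ((1 - x) ^ (-(s + t))) ∂ν ≤
      ENNReal.ofReal ((C * 2 ^ s * (1 - 2 ^ (-t))⁻¹) * (1 - b) ^ (-t)) := by
  classical
  set δ := 1 - b with hδdef
  have hδ : 0 < δ := by simp only [hδdef]; linarith
  set B : ℕ → Set ℝ := fun n => Set.Ico (1 - δ * 2 ^ ((n:ℝ) + 1)) (1 - δ * 2 ^ ((n:ℝ))) with hB
  set q : ℝ := 2 ^ (-t) with hq
  have hq0 : 0 ≤ q := Real.rpow_nonneg (by norm_num) _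
  have hq1 : q < 1 := Real.rpow_lt_one_of_one_lt_of_neg (by norm_num) (by linarith)
  set K : ℝ := C * 2 ^ s * δ ^ (-t) with hK
  have hKnn : 0 ≤ K := by positivity
  have hcov : Set.Ico 0 b ⊆ ⋃ n : ℕ, B n := by
    rintro x ⟨hx1, hx2⟩
    have h1x : δ < 1 - x := by simp only [hδdef]; linarith
    have hle1 : 1 - x ≤ 1 := by linarith
    have hP : ∃ n : ℕ, 1 - x ≤ δ * 2 ^ ((n:ℝ) + 1) := by
      obtain ⟨m, hm⟩ := pow_unbounded_of_one_lt (1 / δ) (one_lt_two (α := ℝ))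
      refine ⟨m, ?_⟩
      have h1 : 1 < δ * (2:ℝ) ^ m := by
        rw [div_lt_iff₀ hδ] at hm; linarith
      have h2 : (2:ℝ) ^ m ≤ (2:ℝ) ^ ((m:ℝ) + 1) := by
        rw [← Real.rpow_natCast 2 m]
        exact Real.rpow_le_rpow_of_exponent_le one_le_two (by linarith)
      nlinarith [hδ.le]
    set n := Nat.find hP with hn
    have hspec : 1 - x ≤ δ * 2 ^ ((n:ℝ) + 1) := Nat.find_spec hP
    have hlower : δ * 2 ^ ((n:ℝ)) < 1 - x := by
      rcases Nat.eq_zero_or_pos n with h0 | hpos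
      · rw [h0]; norm_num; simpa using h1x
      · obtain ⟨k, hk⟩ := Nat.exists_eq_succ_of_ne_zero hpos.ne'
        have hmin := Nat.find_min hP (by omega : k < n)
        push_neg at hmin
        have : (n:ℝ) = (k:ℝ) + 1 := by rw [hk]; push_cast; ring
        rw [this]
        exact hmin
    exact Set.mem_iUnion.2 ⟨n, by constructor <;> [linarith; linarith]⟩
  calc ∫⁻ x in Set.Ico 0 b, ENNReal.ofReal ((1 - x) ^ (-(s + t))) ∂ν
      ≤ ∫⁻ x in ⋃ n : ℕ, B n, ENNReal.ofReal ((1 - x) ^ (-(s + t))) ∂ν := lintegral_mono_set hcov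
    _ ≤ ∑' n : ℕ, ∫⁻ x in B n, ENNReal.ofReal ((1 - x) ^ (-(s + t))) ∂ν := lintegral_iUnion_le _ _
    _ ≤ ∑' n : ℕ, ENNReal.ofReal (K * q ^ n) := by
        refine ENNReal.tsum_le_tsum fun n => ?_
        have hpos : (0:ℝ) < δ * 2 ^ ((n:ℝ)) := by positivity
        have step1 : ∫⁻ x in B n, ENNReal.ofReal ((1 - x) ^ (-(s + t))) ∂ν ≤
            ∫⁻ _ in B n, ENNReal.ofReal ((δ * 2 ^ ((n:ℝ))) ^ (-(s + t))) ∂ν := by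
          refine setLIntegral_mono' measurableSet_Ico fun x hx => ?_
          refine ENNReal.ofReal_le_ofReal ?_
          refine Real.rpow_le_rpow_of_nonpos hpos ?_ (by linarith)
          simp only [hB] at hx
          linarith [hx.2]
        have step2 : ν (B n) ≤ ENNReal.ofReal (C * (δ * 2 ^ ((n:ℝ) + 1)) ^ s) := by
          exact le_trans (measure_mono fun x hx => hx.1) (hM _ (by positivity))
        calc ∫⁻ x in B n, ENNReal.ofReal ((1 - x) ^ (-(s + t))) ∂ν
            ≤ ∫⁻ _ in B n, ENNReal.ofReal ((δ * 2 ^ ((n:ℝ))) ^ (-(s + t))) ∂ν := step1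
          _ = ENNReal.ofReal ((δ * 2 ^ ((n:ℝ))) ^ (-(s + t))) * ν (B n) := setLIntegral_const _ _
          _ ≤ ENNReal.ofReal ((δ * 2 ^ ((n:ℝ))) ^ (-(s + t))) *
              ENNReal.ofReal (C * (δ * 2 ^ ((n:ℝ) + 1)) ^ s) := mul_le_mul_right step2 _
          _ = ENNReal.ofReal ((δ * 2 ^ ((n:ℝ))) ^ (-(s + t)) * (C * (δ * 2 ^ ((n:ℝ) + 1)) ^ s)) :=
              (ENNReal.ofReal_mul (Real.rpow_nonneg hpos.le _)).symm
          _ = ENNReal.ofReal (K * q ^ n) := by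
              rw [rpow_helper hδ]
              congr 1
              rw [hK, hq, ← Real.rpow_natCast ((2:ℝ) ^ (-t)) n,
                ← Real.rpow_mul (by norm_num : (0:ℝ) ≤ 2),
                show (n:ℝ) * (-(s + t)) + ((n:ℝ) + 1) * s = s + (-t) * n by ring,
                Real.rpow_add (by norm_num : (0:ℝ) < 2),
                show (-(s + t)) + s = -t by ring]
              ring
    _ = ENNReal.ofReal (K * (1 - q)⁻¹) := tsum_ofReal_geom hKnn hq0 hq1
    _ = ENNReal.ofReal ((C * 2 ^ s * (1 - 2 ^ (-t))⁻¹) * (1 - b) ^ (-t)) := by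
        rw [hK, hq, ← hδdef]; congr 1; ring

theorem integral_bound_of_carleson (μ : Measure ℝ) [IsFiniteMeasure μ] (s r t : ℝ)
    (ht : 0 < t) (hr : 0 ≤ r) (hrs : r < s)
    (hcar : ∃ C : ℝ, ∀ x ∈ Set.Ico (0:ℝ) 1, (μ (Set.Ico x 1)).toReal ≤ C * (1 - x) ^ s) :
    ∃ C : ℝ, ∀ a : ℂ, ‖a‖ < 1 →
      (∫ x in Set.Ico (0:ℝ) 1,
        (1 - ‖a‖) ^ t / ((1 - x) ^ r * (1 - ‖a‖ * x) ^ (s + t - r)) ∂μ) ≤ C := by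
  obtain ⟨C, hcar⟩ := hcar
  have hs : 0 < s := lt_of_le_of_lt hr hrs
  have hC : 0 ≤ C := by
    have h := hcar 0 ⟨le_refl 0, one_pos⟩
    simp only [sub_zero, Real.one_rpow, mul_one] at h
    exact le_trans ENNReal.toReal_nonneg h
  set ν := μ.restrict (Set.Ico (0:ℝ) 1) with hν
  set K1 : ℝ := C * 2 ^ r * (1 - 2 ^ (r - s))⁻¹ with hK1def
  set K2 : ℝ := C * 2 ^ s * (1 - 2 ^ (-t))⁻¹ with hK2def
  have h2rs : (2:ℝ) ^ (r - s) < 1 := Real.rpow_lt_one_of_one_lt_of_neg (by norm_num) (by linarith)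
  have h2t : (2:ℝ) ^ (-t) < 1 := Real.rpow_lt_one_of_one_lt_of_neg (by norm_num) (by linarith)
  have hK1 : 0 ≤ K1 := mul_nonneg (mul_nonneg hC (Real.rpow_nonneg (by norm_num) _))
    (inv_nonneg.2 (by linarith))
  have hK2 : 0 ≤ K2 := mul_nonneg (mul_nonneg hC (Real.rpow_nonneg (by norm_num) _))
    (inv_nonneg.2 (by linarith))
  refine ⟨K1 + K2, fun a ha => ?_⟩
  set b := ‖a‖ with hb
  have hb0 : 0 ≤ b := norm_nonneg a
  have hb1 : b < 1 := ha
  set δ := 1 - b with hδdef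
  have hδ : 0 < δ := by simp only [hδdef]; linarith
  set f : ℝ → ℝ := fun x => (1 - b) ^ t / ((1 - x) ^ r * (1 - b * x) ^ (s + t - r)) with hf
  have hnn : 0 ≤ᵐ[ν] f := by
    refine ae_restrict_of_forall_mem measurableSet_Ico fun x hx => ?_
    have h1x : (0:ℝ) ≤ 1 - x := by linarith [hx.2]
    have hbx : (0:ℝ) ≤ 1 - b * x := by nlinarith [hx.1, hx.2]
    exact div_nonneg (Real.rpow_nonneg (by linarith) _)
      (mul_nonneg (Real.rpow_nonneg h1x _) (Real.rpow_nonneg hbx _))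
  have hmeas : AEStronglyMeasurable f ν := by fun_prop
  rw [integral_eq_lintegral_of_nonneg_ae hnn hmeas]
  have hM : ∀ y : ℝ, 0 < y → ν (Set.Ici (1 - y)) ≤ ENNReal.ofReal (C * y ^ s) :=
    fun y hy => measureM μ hC hs.le hcar hy
  have hres : ∀ S : Set ℝ, MeasurableSet S → S ⊆ Set.Ico (0:ℝ) 1 → ν.restrict S = μ.restrict S := by
    intro S hSm hSsub
    rw [hν, Measure.restrict_restrict hSm, Set.inter_eq_left.mpr hSsub]
  have piece1 : (∫⁻ x in Set.Ico (0:ℝ) b, ENNReal.ofReal (f x) ∂ν) ≤ ENNReal.ofReal K2 := by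
    calc ∫⁻ x in Set.Ico (0:ℝ) b, ENNReal.ofReal (f x) ∂ν
        ≤ ∫⁻ x in Set.Ico (0:ℝ) b,
            ENNReal.ofReal (δ ^ t) * ENNReal.ofReal ((1 - x) ^ (-(s + t))) ∂ν := by
          refine setLIntegral_mono' measurableSet_Ico fun x hx => ?_
          obtain ⟨hx0, hxb⟩ := hx
          have h1x : (0:ℝ) < 1 - x := by linarith
          have hbxx : 1 - x ≤ 1 - b * x := by nlinarith
          have hfle : f x ≤ δ ^ t * (1 - x) ^ (-(s + t)) := by
            have h1 : f x ≤ (1 - b) ^ t / ((1 - x) ^ r * (1 - x) ^ (s + t - r)) := by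
              simp only [hf]
              gcongr <;> first
                | linarith
                | positivity
                | exact Real.rpow_nonneg (by linarith) _
                | exact Real.rpow_pos_of_pos h1x _
                | exact Real.rpow_le_rpow h1x.le hbxx (by linarith)
            have h2 : (1 - b) ^ t / ((1 - x) ^ r * (1 - x) ^ (s + t - r)) =
                δ ^ t * (1 - x) ^ (-(s + t)) := by
              rw [← Real.rpow_add h1x, show r + (s + t - r) = s + t by ring, ← hδdef,
                Real.rpow_neg h1x.le, ← div_eq_mul_inv]
            rw [← h2]; exact h1
          calc ENNReal.ofReal (f x) ≤ ENNReal.ofReal (δ ^ t * (1 - x) ^ (-(s + t))) :=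
                ENNReal.ofReal_le_ofReal hfle
            _ = _ := ENNReal.ofReal_mul (Real.rpow_nonneg hδ.le _)
      _ = ENNReal.ofReal (δ ^ t) *
          ∫⁻ x in Set.Ico (0:ℝ) b, ENNReal.ofReal ((1 - x) ^ (-(s + t))) ∂ν :=
          lintegral_const_mul' _ _ ENNReal.ofReal_ne_top
      _ ≤ ENNReal.ofReal (δ ^ t) * ENNReal.ofReal (K2 * (1 - b) ^ (-t)) :=
          mul_le_mul_right (lemB ν hC hs ht hM hb1) _
      _ = ENNReal.ofReal K2 := by
          rw [← ENNReal.ofReal_mul (Real.rpow_nonneg hδ.le _), ← hδdef,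
            show δ ^ t * (K2 * δ ^ (-t)) = K2 * (δ ^ t * δ ^ (-t)) by ring,
            ← Real.rpow_add hδ]
          norm_num
  have piece2 : (∫⁻ x in Set.Ico b 1, ENNReal.ofReal (f x) ∂ν) ≤ ENNReal.ofReal K1 := by
    calc ∫⁻ x in Set.Ico b 1, ENNReal.ofReal (f x) ∂ν
        ≤ ∫⁻ x in Set.Ico b 1,
            ENNReal.ofReal (δ ^ (r - s)) * ENNReal.ofReal ((1 - x) ^ (-r)) ∂ν := by
          refine setLIntegral_mono' measurableSet_Ico fun x hx => ?_
          obtain ⟨hxb, hx1⟩ := hx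
          have h1x : (0:ℝ) < 1 - x := by linarith
          have hx0 : (0:ℝ) ≤ x := le_trans hb0 hxb
          have hbxx : δ ≤ 1 - b * x := by simp only [hδdef]; nlinarith
          have hfle : f x ≤ δ ^ (r - s) * (1 - x) ^ (-r) := by
            have h1 : f x ≤ (1 - b) ^ t / ((1 - x) ^ r * δ ^ (s + t - r)) := by
              simp only [hf]
              gcongr <;> first
                | linarith
                | positivity
                | exact Real.rpow_nonneg (by linarith) _
                | exact Real.rpow_pos_of_pos h1x _
                | exact Real.rpow_le_rpow hδ.le hbxx (by linarith)
            have h2 : (1 - b) ^ t / ((1 - x) ^ r * δ ^ (s + t - r)) =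
                δ ^ (r - s) * (1 - x) ^ (-r) := by
              rw [← hδdef, Real.rpow_neg h1x.le, div_mul_eq_div_div_swap, div_eq_mul_inv]
              congr 1
              rw [← Real.rpow_sub hδ]
              congr 1
              ring
            rw [← h2]; exact h1
          calc ENNReal.ofReal (f x) ≤ ENNReal.ofReal (δ ^ (r - s) * (1 - x) ^ (-r)) :=
                ENNReal.ofReal_le_ofReal hfle
            _ = _ := ENNReal.ofReal_mul (Real.rpow_nonneg hδ.le _)
      _ = ENNReal.ofReal (δ ^ (r - s)) *
          ∫⁻ x in Set.Ico b 1, ENNReal.ofReal ((1 - x) ^ (-r)) ∂ν :=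
          lintegral_const_mul' _ _ ENNReal.ofReal_ne_top
      _ ≤ ENNReal.ofReal (δ ^ (r - s)) * ENNReal.ofReal (K1 * (1 - b) ^ (s - r)) :=
          mul_le_mul_right (lemA ν hC hr hrs hM hb1) _
      _ = ENNReal.ofReal K1 := by
          rw [← ENNReal.ofReal_mul (Real.rpow_nonneg hδ.le _), ← hδdef,
            show δ ^ (r - s) * (K1 * δ ^ (s - r)) = K1 * (δ ^ (r - s) * δ ^ (s - r)) by ring,
            ← Real.rpow_add hδ]
          norm_num
  have key : ∫⁻ x, ENNReal.ofReal (f x) ∂ν ≤ ENNReal.ofReal (K1 + K2) := by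
    have h0 : ∫⁻ x, ENNReal.ofReal (f x) ∂ν =
        ∫⁻ x in Set.Ico (0:ℝ) b ∪ Set.Ico b 1, ENNReal.ofReal (f x) ∂μ := by
      rw [Set.Ico_union_Ico_eq_Ico hb0 hb1.le, hν]
    have hr1 : (∫⁻ x in Set.Ico (0:ℝ) b, ENNReal.ofReal (f x) ∂μ) =
        ∫⁻ x in Set.Ico (0:ℝ) b, ENNReal.ofReal (f x) ∂ν := by
      rw [hres _ measurableSet_Ico fun x hx => ⟨hx.1, lt_trans hx.2 hb1⟩]
    have hr2 : (∫⁻ x in Set.Ico b 1, ENNReal.ofReal (f x) ∂μ) =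
        ∫⁻ x in Set.Ico b 1, ENNReal.ofReal (f x) ∂ν := by
      rw [hres _ measurableSet_Ico fun x hx => ⟨le_trans hb0 hx.1, hx.2⟩]
    calc ∫⁻ x, ENNReal.ofReal (f x) ∂ν
        ≤ (∫⁻ x in Set.Ico (0:ℝ) b, ENNReal.ofReal (f x) ∂μ) +
            ∫⁻ x in Set.Ico b 1, ENNReal.ofReal (f x) ∂μ := by
          rw [h0]; exact lintegral_union_le _ _ _
      _ ≤ ENNReal.ofReal K2 + ENNReal.ofReal K1 := by
          rw [hr1, hr2]; exact add_le_add piece1 piece2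
      _ = ENNReal.ofReal (K1 + K2) := by
          rw [← ENNReal.ofReal_add hK2 hK1, add_comm]
  calc (∫⁻ x, ENNReal.ofReal (f x) ∂ν).toReal
      ≤ (ENNReal.ofReal (K1 + K2)).toReal := ENNReal.toReal_mono ENNReal.ofReal_ne_top key
    _ = K1 + K2 := ENNReal.toReal_ofReal (by linarith)
end

section
/- Let 0 < p < 2 and let μ be a positive finite Borel measure on [0,1). If the function F(z) = ∑_{n=0}^∞ μ_n z^n (where μ_n = ∫_{[0,1)} t^n dμ(t)) belongs to the Bloch space, i.e. sup_{z∈D} (1-|z|²)|F'(z)| < ∞, then μ_n = O(1/n) and hence μ is a Carleson measure. -/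
/-!
The moments `μₙ` are nonnegative and decreasing, so at `r = 1 - 1/(2k)` the derivative
`F'(r) = ∑ n μₙ r^(n-1)` is at least `μₖ ∑_{n ≤ k} n r^(n-1) ≥ μₖ k² / 4`, because `r^k ≥ 1/2` by
Bernoulli. The Bloch bound `(1 - r) F'(r) ≤ C` then gives `μₖ ≤ 8C / k`. Finally
`tᵏ μ([t,1)) ≤ μₖ`, and `k ≈ 1/(2(1-t))` turns this into `μ([t,1)) = O(1 - t)`.
-/

open MeasureTheory Set Metric Complex

lemma summable_natCast_mul_pow_pred {ρ : ℝ} (h0 : 0 ≤ ρ) (h1 : ρ < 1) :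
    Summable fun n : ℕ => (n : ℝ) * ρ ^ (n - 1) := by
  rw [← summable_nat_add_iff 1]
  have hgeom := summable_geometric_of_lt_one h0 h1
  have hρ : ‖ρ‖ < 1 := by rwa [Real.norm_of_nonneg h0]
  simpa [add_mul] using (summable_pow_mul_geometric_of_norm_lt_one 1 hρ).add hgeom

theorem hasDerivAt_tsum_mul_pow {𝕜 : Type*} [RCLike 𝕜] {a : ℕ → 𝕜} {M : ℝ}
    (ha : ∀ n, ‖a n‖ ≤ M) {z : 𝕜} (hz : ‖z‖ < 1) :
    HasDerivAt (fun w => ∑' n, a n * w ^ n) (∑' n, a n * (n * z ^ (n - 1))) z := by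
  obtain ⟨ρ, hzρ, hρ1⟩ := exists_between hz
  have hρ0 : 0 < ρ := (norm_nonneg z).trans_lt hzρ
  refine hasDerivAt_tsum_of_isPreconnected
    ((summable_natCast_mul_pow_pred hρ0.le hρ1).mul_left M) isOpen_ball
    (convex_ball (0 : 𝕜) ρ).isPreconnected (fun n y _ => (hasDerivAt_pow n y).const_mul (a n))
    (fun n y hy => ?_) (mem_ball_self hρ0) ?_ (mem_ball_zero_iff.mpr hzρ)
  · rw [mem_ball_zero_iff] at hy
    rw [norm_mul, norm_mul, norm_pow, RCLike.norm_natCast]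
    gcongr
    · exact (norm_nonneg _).trans (ha 0)
    · exact ha n
  · refine summable_of_ne_finset_zero (s := {0}) fun n hn => ?_
    rw [zero_pow (by simpa using hn), mul_zero]

lemma half_le_pow_of_mul_one_sub_le {x : ℝ} (hx : -1 ≤ x) {n : ℕ} (h : n * (1 - x) ≤ 1 / 2) :
    1 / 2 ≤ x ^ n := by
  have := one_add_mul_le_pow (a := x - 1) (by linarith) n
  rw [add_sub_cancel] at this
  linarith

lemma mul_sq_le_four_mul_tsum {a : ℕ → ℝ} (ha0 : ∀ n, 0 ≤ a n) (ha : Antitone a) {r : ℝ}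
    (hr0 : 0 ≤ r) (hr1 : r ≤ 1) (hs : Summable fun n => a n * (n * r ^ (n - 1))) {k : ℕ}
    (hk : k * (1 - r) ≤ 1 / 2) :
    a k * k ^ 2 ≤ 4 * ∑' n, a n * (n * r ^ (n - 1)) := by
  have hterm : ∀ n ∈ Finset.range (k + 1), a k * n / 2 ≤ a n * (n * r ^ (n - 1)) := by
    intro n hn
    have hnk : n ≤ k := Finset.mem_range_succ_iff.mp hn
    have hr : 1 / 2 ≤ r ^ (n - 1) :=
      (half_le_pow_of_mul_one_sub_le (by linarith) hk).trans
        (pow_le_pow_of_le_one hr0 hr1 (by omega))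
    calc a k * n / 2 = a k * (n * (1 / 2)) := by ring
      _ ≤ a n * (n * r ^ (n - 1)) := by gcongr; exacts [ha0 n, ha hnk]
  have hgauss : ((∑ n ∈ Finset.range (k + 1), n : ℕ) : ℝ) * 2 = (k + 1) * k := by
    exact_mod_cast Finset.sum_range_id_mul_two (k + 1)
  push_cast at hgauss
  calc a k * k ^ 2 ≤ 4 * ∑ n ∈ Finset.range (k + 1), a k * n / 2 := by
        rw [← Finset.sum_div, ← Finset.mul_sum]
        nlinarith [ha0 k]
    _ ≤ 4 * ∑' n, a n * (n * r ^ (n - 1)) := by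
        gcongr
        exact (Finset.sum_le_sum hterm).trans
          (hs.sum_le_tsum _ fun n _ => mul_nonneg (ha0 n) (by positivity))

lemma mul_le_of_bloch_bound {a : ℕ → ℝ} (ha0 : ∀ n, 0 ≤ a n) (ha : Antitone a) {C : ℝ}
    (hC : ∀ r : ℝ, 0 ≤ r → r < 1 →
      (1 - r ^ 2) * ‖deriv (fun w : ℂ => ∑' n, (a n : ℂ) * w ^ n) r‖ ≤ C)
    {k : ℕ} (hk : 1 ≤ k) : a k * k ≤ 8 * C := by
  have hk₀ : (0 : ℝ) < k := by exact_mod_cast hk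
  set r : ℝ := 1 - 1 / (2 * k) with hr
  have hkr : k * (1 - r) = 1 / 2 := by rw [hr]; field_simp; ring
  have hr0 : 0 ≤ r := by
    rw [hr, sub_nonneg, div_le_one (by positivity)]
    exact_mod_cast (by omega : 1 ≤ 2 * k)
  have hr1 : r < 1 := by rw [hr]; linarith [show 0 < 1 / (2 * (k : ℝ)) by positivity]
  have hs : Summable fun n => a n * (n * r ^ (n - 1)) :=
    ((summable_natCast_mul_pow_pred hr0 hr1).mul_left (a 0)).of_nonneg_of_le
      (fun n => mul_nonneg (ha0 n) (by positivity))
      (fun n => mul_le_mul_of_nonneg_right (ha n.zero_le) (by positivity))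
  set S := ∑' n, a n * (n * r ^ (n - 1))
  have hS0 : 0 ≤ S := tsum_nonneg fun n => mul_nonneg (ha0 n) (by positivity)
  have hderiv : deriv (fun w : ℂ => ∑' n, (a n : ℂ) * w ^ n) r = S := by
    have hbdd : ∀ n, ‖(a n : ℂ)‖ ≤ a 0 := fun n => by
      rw [norm_real, Real.norm_of_nonneg (ha0 n)]; exact ha n.zero_le
    rw [(hasDerivAt_tsum_mul_pow hbdd (by rwa [norm_real, Real.norm_of_nonneg hr0])).deriv,
      ofReal_tsum]
    push_cast
    rfl
  have hbloch : (1 - r) * S ≤ C :=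
    calc (1 - r) * S ≤ (1 - r ^ 2) * ‖(S : ℂ)‖ := by
          rw [norm_real, Real.norm_of_nonneg hS0]
          gcongr
          nlinarith
      _ ≤ C := hderiv ▸ hC r hr0 hr1
  have hlower := mul_sq_le_four_mul_tsum ha0 ha hr0 hr1.le hs hkr.le
  nlinarith [ha0 k]

noncomputable def icoMoment (μ : Measure ℝ) (n : ℕ) : ℝ := ∫ t in Ico (0 : ℝ) 1, t ^ n ∂μ

section icoMoment

variable (μ : Measure ℝ)

lemma icoMoment_nonneg (n : ℕ) : 0 ≤ icoMoment μ n :=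
  setIntegral_nonneg measurableSet_Ico fun _ ht => pow_nonneg ht.1 n

variable [IsFiniteMeasure μ]

lemma integrableOn_pow_Ico (n : ℕ) : IntegrableOn (fun t : ℝ => t ^ n) (Ico 0 1) μ := by
  refine Integrable.mono' (integrable_const 1) (continuous_pow n).aestronglyMeasurable ?_
  filter_upwards [ae_restrict_mem measurableSet_Ico] with t ht
  rw [Real.norm_of_nonneg (pow_nonneg ht.1 n)]
  exact pow_le_one₀ ht.1 ht.2.le

lemma icoMoment_antitone : Antitone (icoMoment μ) := fun _ _ hab =>
  setIntegral_mono_on (integrableOn_pow_Ico μ _) (integrableOn_pow_Ico μ _) measurableSet_Ico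
    fun _ ht => pow_le_pow_of_le_one ht.1 ht.2.le hab

lemma pow_mul_measure_Ico_le_icoMoment {t : ℝ} (ht : 0 ≤ t) (n : ℕ) :
    t ^ n * (μ (Ico t 1)).toReal ≤ icoMoment μ n := by
  have hsub : Ico t 1 ⊆ Ico 0 1 := Ico_subset_Ico_left ht
  calc t ^ n * (μ (Ico t 1)).toReal ≤ ∫ s in Ico t 1, s ^ n ∂μ :=
        setIntegral_ge_of_const_le_real measurableSet_Ico (measure_ne_top μ _)
          (fun s hs => pow_le_pow_left₀ ht hs.1 n) ((integrableOn_pow_Ico μ n).mono_set hsub)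
    _ ≤ icoMoment μ n :=
        setIntegral_mono_set (integrableOn_pow_Ico μ n)
          ((ae_restrict_mem measurableSet_Ico).mono fun s hs => pow_nonneg hs.1 n)
          hsub.eventuallyLE

variable {μ}

lemma measure_Ico_le_of_icoMoment_le {C : ℝ} (hC : ∀ n : ℕ, 1 ≤ n → icoMoment μ n ≤ C / n)
    {t : ℝ} (ht : t ∈ Ico 0 1) :
    (μ (Ico t 1)).toReal ≤ (8 * C + 2 * (μ univ).toReal) * (1 - t) := by
  have hC0 : 0 ≤ C := by simpa using (icoMoment_nonneg μ 1).trans (hC 1 le_rfl)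
  have h1t : 0 < 1 - t := by linarith [ht.2]
  have hμ : (μ (Ico t 1)).toReal ≤ (μ univ).toReal :=
    ENNReal.toReal_mono (measure_ne_top μ _) (measure_mono (subset_univ _))
  have hX0 : 0 ≤ (μ (Ico t 1)).toReal := ENNReal.toReal_nonneg
  have hM : 0 ≤ (μ univ).toReal * (1 - t) := mul_nonneg ENNReal.toReal_nonneg h1t.le
  rcases lt_or_ge t (1 / 2) with hsmall | hlarge
  · nlinarith [mul_nonneg hC0 h1t.le]
  -- `n ≈ 1 / (2 (1 - t))` keeps `t ^ n ≥ 1 / 2` while `1 / n ≤ 4 (1 - t)`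
  set n := ⌊1 / (2 * (1 - t))⌋₊
  have hx1 : 1 ≤ 1 / (2 * (1 - t)) := by rw [le_div_iff₀ (by positivity)]; linarith
  have hn1 : 1 ≤ n := Nat.le_floor (by exact_mod_cast hx1)
  have hn₀ : (0 : ℝ) < n := by exact_mod_cast hn1
  have hnt : n * (1 - t) ≤ 1 / 2 := by
    have := Nat.floor_le (zero_le_one.trans hx1)
    rw [le_div_iff₀ (by positivity)] at this
    linarith
  have hn4 : 1 ≤ 4 * n * (1 - t) := by
    have := Nat.lt_floor_add_one (1 / (2 * (1 - t)))
    rw [div_lt_iff₀ (by positivity)] at this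
    have : (1 : ℝ) ≤ n := by exact_mod_cast hn1
    nlinarith
  have htn := half_le_pow_of_mul_one_sub_le (by linarith [ht.1]) hnt
  have hmom := (pow_mul_measure_Ico_le_icoMoment μ ht.1 n).trans (hC n hn1)
  rw [le_div_iff₀ hn₀] at hmom
  have hXn : (μ (Ico t 1)).toReal * n ≤ 2 * C := by nlinarith [mul_nonneg hX0 hn₀.le]
  have hX : (μ (Ico t 1)).toReal ≤ 8 * C * (1 - t) := by nlinarith
  linarith

end icoMoment

theorem carleson_of_moment_series_Bloch_general
    (μ : Measure ℝ) [IsFiniteMeasure μ]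
    (hbloch : ∃ C : ℝ, ∀ z ∈ Metric.ball (0:ℂ) 1,
      (1 - ‖z‖ ^ 2) *
        ‖deriv (fun w : ℂ =>
            ∑' n : ℕ, ((∫ t in Set.Ico (0:ℝ) 1, t ^ n ∂μ : ℝ) : ℂ) * w ^ n) z‖ ≤ C) :
    (∃ C : ℝ, ∀ n : ℕ, 1 ≤ n → (∫ t in Set.Ico (0:ℝ) 1, t ^ n ∂μ) ≤ C / n) ∧
    (∃ C : ℝ, ∀ t ∈ Set.Ico (0:ℝ) 1, (μ (Set.Ico t 1)).toReal ≤ C * (1 - t)) := by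
  obtain ⟨C, hC⟩ := hbloch
  have hC_real : ∀ r : ℝ, 0 ≤ r → r < 1 →
      (1 - r ^ 2) * ‖deriv (fun w : ℂ => ∑' n, (icoMoment μ n : ℂ) * w ^ n) r‖ ≤ C := by
    intro r hr0 hr1
    have hr : ‖(r : ℂ)‖ = r := by rw [norm_real, Real.norm_of_nonneg hr0]
    have := hC r (mem_ball_zero_iff.mpr (hr.symm ▸ hr1))
    rwa [hr] at this
  have hdecay : ∀ n : ℕ, 1 ≤ n → icoMoment μ n ≤ 8 * C / n := fun n hn =>
    (le_div_iff₀ (by exact_mod_cast hn)).2 <|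
      mul_le_of_bloch_bound (icoMoment_nonneg μ) (icoMoment_antitone μ) hC_real hn
  exact ⟨⟨8 * C, hdecay⟩, ⟨_, fun t ht => measure_Ico_le_of_icoMoment_le hdecay ht⟩⟩

theorem carleson_of_moment_series_Bloch (p : ℝ) (hp0 : 0 < p) (hp2 : p < 2)
    (μ : Measure ℝ) [IsFiniteMeasure μ]
    (hbloch : ∃ C : ℝ, ∀ z ∈ Metric.ball (0:ℂ) 1,
      (1 - ‖z‖ ^ 2) *
        ‖deriv (fun w : ℂ =>
            ∑' n : ℕ, ((∫ t in Set.Ico (0:ℝ) 1, t ^ n ∂μ : ℝ) : ℂ) * w ^ n) z‖ ≤ C) :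
    (∃ C : ℝ, ∀ n : ℕ, 1 ≤ n → (∫ t in Set.Ico (0:ℝ) 1, t ^ n ∂μ) ≤ C / n) ∧
    (∃ C : ℝ, ∀ t ∈ Set.Ico (0:ℝ) 1, (μ (Set.Ico t 1)).toReal ≤ C * (1 - t)) :=
  carleson_of_moment_series_Bloch_general μ hbloch
end

section
/- For 0 < p < 2 and a 2-Carleson measure μ on [0,1), one has sup_{a∈D} ∫_{[0,1)} (1-|a|²)^{p/2} / ((1-t²)^{2-p/2} |1-ta|^p) dμ(t) < ∞. -/
/-!
Put `r = 1 - |a|`, `x = 1 - t` and `δ = p / 2`. Since `|1 - t a| ≥ 1 - t |a| ≥ max x r` and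
`1 - |a|² ≤ 2 r`, the integrand is at most `2^δ r^δ x^(-δ-2)` where `x > r` and
`2^δ r^(-δ) x^(δ-2)` where `x ≤ r`. Cut both ranges into dyadic shells `ρ ≤ x ≤ 2ρ`: the Carleson
condition gives each shell mass at most `4Cρ²`, so the shells contribute the terms of a geometric
series with ratio `2^(-δ)` whose sum does not depend on `r`.
-/

open MeasureTheory Set Metric Complex

lemma one_sub_mul_norm_le_norm_one_sub_mul {t : ℝ} (ht : 0 ≤ t) (a : ℂ) :
    1 - t * ‖a‖ ≤ ‖1 - (t : ℂ) * a‖ := by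
  simpa [norm_mul, abs_of_nonneg ht] using norm_sub_norm_le (1 : ℂ) (t * a)

lemma integrand_nonneg {p t : ℝ} {a : ℂ} (ha : ‖a‖ < 1) (ht0 : 0 ≤ t) (ht1 : t < 1) :
    0 ≤ (1 - ‖a‖ ^ 2) ^ (p / 2) / ((1 - t ^ 2) ^ (2 - p / 2) * ‖1 - (t : ℂ) * a‖ ^ p) := by
  have : ‖a‖ ^ 2 < 1 := by nlinarith [norm_nonneg a]
  have : t ^ 2 < 1 := by nlinarith
  exact div_nonneg (Real.rpow_nonneg (by linarith) _)
    (mul_nonneg (Real.rpow_nonneg (by linarith) _) (Real.rpow_nonneg (norm_nonneg _) _))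

lemma integrand_le {p t b : ℝ} {a : ℂ} (hp : 0 ≤ p) (hp4 : p ≤ 4) (ha : ‖a‖ < 1)
    (ht0 : 0 ≤ t) (ht1 : t < 1) (hb : 0 < b) (hbt : b ≤ 1 - t * ‖a‖) :
    (1 - ‖a‖ ^ 2) ^ (p / 2) / ((1 - t ^ 2) ^ (2 - p / 2) * ‖1 - (t : ℂ) * a‖ ^ p) ≤
      2 ^ (p / 2) * ((1 - ‖a‖) ^ (p / 2) / ((1 - t) ^ (2 - p / 2) * b ^ p)) := by
  have hs := norm_nonneg a
  have hnum : (1 - ‖a‖ ^ 2) ^ (p / 2) ≤ (2 * (1 - ‖a‖)) ^ (p / 2) :=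
    Real.rpow_le_rpow (by nlinarith) (by nlinarith) (by linarith)
  have hden : (1 - t) ^ (2 - p / 2) * b ^ p ≤
      (1 - t ^ 2) ^ (2 - p / 2) * ‖1 - (t : ℂ) * a‖ ^ p :=
    mul_le_mul (Real.rpow_le_rpow (by linarith) (by nlinarith) (by linarith))
      (Real.rpow_le_rpow hb.le (hbt.trans (one_sub_mul_norm_le_norm_one_sub_mul ht0 a)) hp)
      (by positivity) (Real.rpow_nonneg (by nlinarith) _)
  rw [Real.mul_rpow zero_le_two (by linarith)] at hnum
  rw [← mul_div_assoc]
  exact div_le_div₀ (by positivity) hnum (by positivity) hden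

lemma integrand_le_of_lt_norm {p t : ℝ} {a : ℂ} (hp : 0 ≤ p) (hp4 : p ≤ 4) (ha : ‖a‖ < 1)
    (ht0 : 0 ≤ t) (hta : t < ‖a‖) :
    (1 - ‖a‖ ^ 2) ^ (p / 2) / ((1 - t ^ 2) ^ (2 - p / 2) * ‖1 - (t : ℂ) * a‖ ^ p) ≤
      2 ^ (p / 2) * ((1 - ‖a‖) ^ (p / 2) * (1 - t) ^ (-(p / 2) - 2)) := by
  have ht : 0 < 1 - t := by linarith
  refine (integrand_le hp hp4 ha ht0 (by linarith) ht (by nlinarith)).trans_eq ?_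
  rw [← Real.rpow_add ht, show -(p / 2) - 2 = -(2 - p / 2 + p) by ring, Real.rpow_neg ht.le]
  ring

lemma integrand_le_of_norm_le {p t : ℝ} {a : ℂ} (hp : 0 ≤ p) (hp4 : p ≤ 4) (ha : ‖a‖ < 1)
    (hat : ‖a‖ ≤ t) (ht1 : t < 1) :
    (1 - ‖a‖ ^ 2) ^ (p / 2) / ((1 - t ^ 2) ^ (2 - p / 2) * ‖1 - (t : ℂ) * a‖ ^ p) ≤
      2 ^ (p / 2) * ((1 - ‖a‖) ^ (-(p / 2)) * (1 - t) ^ (p / 2 - 2)) := by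
  have ht : 0 < 1 - t := by linarith
  have hr : 0 < 1 - ‖a‖ := by linarith
  refine (integrand_le hp hp4 ha ((norm_nonneg a).trans hat) ht1 hr
    (by nlinarith [norm_nonneg a])).trans_eq ?_
  rw [show -(p / 2) = p / 2 - p by ring, Real.rpow_sub hr, show p / 2 - 2 = -(2 - p / 2) by ring,
    Real.rpow_neg ht.le]
  ring

/-- With `x = 1 - t`, `r = 1 - ‖a‖` and `δ = p / 2`, the integrand is at most `2 ^ δ` times this. -/
noncomputable def carlesonKernel (δ r x : ℝ) : ENNReal :=
  (Ioi r).indicator (fun x => ENNReal.ofReal (r ^ δ * x ^ (-δ - 2))) x +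
    (Ioc 0 r).indicator (fun x => ENNReal.ofReal (r ^ (-δ) * x ^ (δ - 2))) x

@[fun_prop]
lemma measurable_carlesonKernel (δ r : ℝ) : Measurable (carlesonKernel δ r) :=
  ((by fun_prop : Measurable fun x : ℝ => ENNReal.ofReal (r ^ δ * x ^ (-δ - 2))).indicator
    measurableSet_Ioi).add
  ((by fun_prop : Measurable fun x : ℝ => ENNReal.ofReal (r ^ (-δ) * x ^ (δ - 2))).indicator
    measurableSet_Ioc)

lemma ofReal_norm_integrand_le_carlesonKernel {p t : ℝ} {a : ℂ} (hp : 0 ≤ p) (hp4 : p ≤ 4)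
    (ha : ‖a‖ < 1) (ht : t ∈ Ico (0 : ℝ) 1) :
    ENNReal.ofReal ‖(1 - ‖a‖ ^ 2) ^ (p / 2) /
        ((1 - t ^ 2) ^ (2 - p / 2) * ‖1 - (t : ℂ) * a‖ ^ p)‖ ≤
      ENNReal.ofReal (2 ^ (p / 2)) * carlesonKernel (p / 2) (1 - ‖a‖) (1 - t) := by
  obtain ⟨ht0, ht1⟩ := ht
  rw [Real.norm_of_nonneg (integrand_nonneg ha ht0 ht1), carlesonKernel]
  rcases lt_or_ge t ‖a‖ with hta | hat
  · rw [indicator_of_mem (mem_Ioi.2 (by linarith)),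
      indicator_of_notMem (fun h => by linarith [h.2]), add_zero,
      ← ENNReal.ofReal_mul (by positivity)]
    exact ENNReal.ofReal_le_ofReal (integrand_le_of_lt_norm hp hp4 ha ht0 hta)
  · rw [indicator_of_notMem (fun h => by linarith [mem_Ioi.1 h]),
      indicator_of_mem (mem_Ioc.2 ⟨by linarith, by linarith⟩), zero_add,
      ← ENNReal.ofReal_mul (by positivity)]
    exact ENNReal.ofReal_le_ofReal (integrand_le_of_norm_le hp hp4 ha hat ht1)

lemma Ioi_subset_iUnion_Icc_two_pow_mul {r : ℝ} (hr : 0 < r) :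
    Ioi r ⊆ ⋃ k : ℕ, Icc (2 ^ k * r) (2 * (2 ^ k * r)) := by
  intro x hx
  obtain ⟨k, hk, hk'⟩ := exists_nat_pow_near ((one_le_div hr).2 (le_of_lt hx)) one_lt_two
  rw [le_div_iff₀ hr] at hk
  rw [div_lt_iff₀ hr, pow_succ'] at hk'
  exact mem_iUnion.2 ⟨k, hk, by linarith⟩

lemma Ioc_zero_subset_iUnion_Icc_inv_two_pow_mul {r : ℝ} (hr : 0 < r) :
    Ioc 0 r ⊆ ⋃ k : ℕ, Icc (2⁻¹ ^ k * r) (2 * (2⁻¹ ^ k * r)) := by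
  rintro x ⟨hx, hxr⟩
  obtain ⟨k, hk, hk'⟩ := exists_nat_pow_near ((one_le_div hx).2 (by linarith : x ≤ 2 * r))
    one_lt_two
  rw [le_div_iff₀ hx] at hk
  rw [div_lt_iff₀ hx, pow_succ'] at hk'
  have h2k : (0 : ℝ) < 2 ^ k := by positivity
  refine mem_iUnion.2 ⟨k, ?_, ?_⟩ <;> rw [inv_pow, inv_mul_eq_div]
  · rw [div_le_iff₀ h2k]; linarith
  · rw [mul_div_assoc', le_div_iff₀ h2k]; linarith

section Carleson

variable {ν : Measure ℝ} {C : ℝ}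

lemma setLIntegral_Icc_rpow_le (hν : ∀ R, 0 < R → ν (Ioc 0 R) ≤ ENNReal.ofReal (C * R ^ 2))
    {c ρ ε : ℝ} (hc : 0 ≤ c) (hρ : 0 < ρ) (hε : ε ≤ 2) :
    ∫⁻ x in Icc ρ (2 * ρ), ENNReal.ofReal (c * x ^ (ε - 2)) ∂ν ≤
      ENNReal.ofReal (4 * C * (c * ρ ^ ε)) := by
  calc ∫⁻ x in Icc ρ (2 * ρ), ENNReal.ofReal (c * x ^ (ε - 2)) ∂ν
      ≤ ∫⁻ _ in Icc ρ (2 * ρ), ENNReal.ofReal (c * ρ ^ (ε - 2)) ∂ν :=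
        setLIntegral_mono measurable_const fun x hx => ENNReal.ofReal_le_ofReal <|
          mul_le_mul_of_nonneg_left (Real.rpow_le_rpow_of_nonpos hρ hx.1 (by linarith)) hc
    _ = ENNReal.ofReal (c * ρ ^ (ε - 2)) * ν (Icc ρ (2 * ρ)) := setLIntegral_const _ _
    _ ≤ ENNReal.ofReal (c * ρ ^ (ε - 2)) * ENNReal.ofReal (C * (2 * ρ) ^ 2) := by
        gcongr
        exact (measure_mono (Icc_subset_Ioc hρ le_rfl)).trans (hν _ (by positivity))
    _ = ENNReal.ofReal (4 * C * (c * ρ ^ ε)) := by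
        rw [← ENNReal.ofReal_mul (by positivity), Real.rpow_sub hρ, Real.rpow_two]
        congr 1
        field_simp
        ring

lemma setLIntegral_rpow_le_of_subset_dyadic
    (hν : ∀ R, 0 < R → ν (Ioc 0 R) ≤ ENNReal.ofReal (C * R ^ 2))
    {S : Set ℝ} {b r ε : ℝ} (hb : 0 < b) (hr : 0 < r) (hε : ε ≤ 2)
    (hS : S ⊆ ⋃ k : ℕ, Icc (b ^ k * r) (2 * (b ^ k * r))) :
    ∫⁻ x in S, ENNReal.ofReal (r ^ (-ε) * x ^ (ε - 2)) ∂ν ≤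
      ENNReal.ofReal (4 * C) * (1 - ENNReal.ofReal (b ^ ε))⁻¹ := by
  have shell (k : ℕ) :
      ∫⁻ x in Icc (b ^ k * r) (2 * (b ^ k * r)), ENNReal.ofReal (r ^ (-ε) * x ^ (ε - 2)) ∂ν ≤
        ENNReal.ofReal (4 * C) * ENNReal.ofReal (b ^ ε) ^ k := by
    refine (setLIntegral_Icc_rpow_le hν (by positivity) (by positivity) hε).trans_eq ?_
    rw [Real.mul_rpow (by positivity) hr.le, ← Real.rpow_pow_comm hb.le, Real.rpow_neg hr.le,
      mul_comm ((b ^ ε) ^ k), inv_mul_cancel_left₀ (by positivity),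
      ENNReal.ofReal_mul' (by positivity), ENNReal.ofReal_pow (by positivity)]
  calc ∫⁻ x in S, ENNReal.ofReal (r ^ (-ε) * x ^ (ε - 2)) ∂ν
      ≤ ∑' k : ℕ, ∫⁻ x in Icc (b ^ k * r) (2 * (b ^ k * r)),
          ENNReal.ofReal (r ^ (-ε) * x ^ (ε - 2)) ∂ν :=
        (lintegral_mono_set hS).trans (lintegral_iUnion_le _ _)
    _ ≤ ∑' k : ℕ, ENNReal.ofReal (4 * C) * ENNReal.ofReal (b ^ ε) ^ k :=
        ENNReal.tsum_le_tsum shell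
    _ = ENNReal.ofReal (4 * C) * (1 - ENNReal.ofReal (b ^ ε))⁻¹ := by
        rw [ENNReal.tsum_mul_left, ENNReal.tsum_geometric]

lemma lintegral_carlesonKernel_le (hν : ∀ R, 0 < R → ν (Ioc 0 R) ≤ ENNReal.ofReal (C * R ^ 2))
    {δ r : ℝ} (hδ : |δ| ≤ 2) (hr : 0 < r) :
    ∫⁻ x, carlesonKernel δ r x ∂ν ≤
      ENNReal.ofReal (4 * C) * (2 * (1 - ENNReal.ofReal (2⁻¹ ^ δ))⁻¹) := by
  obtain ⟨hδ₁, hδ₂⟩ := abs_le.1 hδ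
  have far := setLIntegral_rpow_le_of_subset_dyadic hν (ε := -δ) two_pos hr (by linarith)
    (Ioi_subset_iUnion_Icc_two_pow_mul hr)
  have near := setLIntegral_rpow_le_of_subset_dyadic hν (ε := δ) (by norm_num) hr hδ₂
    (Ioc_zero_subset_iUnion_Icc_inv_two_pow_mul hr)
  rw [neg_neg, Real.rpow_neg zero_le_two, ← Real.inv_rpow zero_le_two] at far
  unfold carlesonKernel
  rw [lintegral_add_left ((by fun_prop : Measurable fun x : ℝ =>
      ENNReal.ofReal (r ^ δ * x ^ (-δ - 2))).indicator measurableSet_Ioi),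
    lintegral_indicator measurableSet_Ioi, lintegral_indicator measurableSet_Ioc, two_mul, mul_add]
  exact add_le_add far near

end Carleson

lemma map_one_sub_restrict_Ico_Ioc_le {μ : Measure ℝ} [IsFiniteMeasure μ] {C : ℝ}
    (hcar : ∀ t ∈ Ico (0 : ℝ) 1, (μ (Ico t 1)).toReal ≤ C * (1 - t) ^ 2) {R : ℝ} (hR : 0 < R) :
    (μ.restrict (Ico 0 1)).map (fun t => 1 - t) (Ioc 0 R) ≤ ENNReal.ofReal (C * R ^ 2) := by
  have hC : 0 ≤ C := by simpa using ENNReal.toReal_nonneg.trans (hcar 0 ⟨le_rfl, one_pos⟩)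
  set t₀ := max 0 (1 - R)
  have ht₀ : t₀ ∈ Ico (0 : ℝ) 1 := ⟨le_max_left _ _, max_lt one_pos (by linarith)⟩
  have ht₀R : 1 - t₀ ≤ R := by linarith [le_max_right 0 (1 - R)]
  rw [Measure.map_apply (by fun_prop) measurableSet_Ioc, Measure.restrict_apply' measurableSet_Ico]
  calc μ ((fun t => 1 - t) ⁻¹' Ioc 0 R ∩ Ico 0 1)
      ≤ μ (Ico t₀ 1) := measure_mono fun t ⟨⟨_, ht⟩, ht0, ht1⟩ =>
        ⟨max_le ht0 (by linarith [show 1 - t ≤ R from ht]), ht1⟩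
    _ = ENNReal.ofReal (μ (Ico t₀ 1)).toReal := (ENNReal.ofReal_toReal (measure_ne_top _ _)).symm
    _ ≤ ENNReal.ofReal (C * (1 - t₀) ^ 2) := ENNReal.ofReal_le_ofReal (hcar _ ht₀)
    _ ≤ ENNReal.ofReal (C * R ^ 2) := by
        gcongr
        linarith [ht₀.2]

theorem two_carleson_integral_estimate (p : ℝ) (hp0 : 0 < p) (hp2 : p < 2)
    (μ : Measure ℝ) [IsFiniteMeasure μ]
    (hcar : ∃ C : ℝ, ∀ t ∈ Set.Ico (0:ℝ) 1, (μ (Set.Ico t 1)).toReal ≤ C * (1 - t) ^ 2) :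
    ∃ C : ℝ, ∀ a : ℂ, ‖a‖ < 1 →
      (∫ t in Set.Ico (0:ℝ) 1,
        (1 - ‖a‖ ^ 2) ^ (p / 2) /
          ((1 - t ^ 2) ^ (2 - p / 2) * ‖1 - (t:ℂ) * a‖ ^ p) ∂μ) ≤ C := by
  obtain ⟨C, hcar⟩ := hcar
  have hq : ENNReal.ofReal (2⁻¹ ^ (p / 2)) < 1 :=
    ENNReal.ofReal_lt_one.2 (Real.rpow_lt_one (by norm_num) (by norm_num) (by linarith))
  have : (1 - ENNReal.ofReal (2⁻¹ ^ (p / 2)))⁻¹ ≠ ⊤ :=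
    ENNReal.inv_ne_top.2 (tsub_pos_of_lt hq).ne'
  set K := ENNReal.ofReal (2 ^ (p / 2)) *
    (ENNReal.ofReal (4 * C) * (2 * (1 - ENNReal.ofReal (2⁻¹ ^ (p / 2)))⁻¹))
  refine ⟨K.toReal, fun a ha => (Real.le_norm_self _).trans <|
    (norm_integral_le_lintegral_norm _).trans (ENNReal.toReal_mono (by finiteness) ?_)⟩
  calc _ ≤ ∫⁻ t in Ico 0 1,
          ENNReal.ofReal (2 ^ (p / 2)) * carlesonKernel (p / 2) (1 - ‖a‖) (1 - t) ∂μ :=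
        setLIntegral_mono (by fun_prop) fun t ht =>
          ofReal_norm_integrand_le_carlesonKernel hp0.le (by linarith) ha ht
    _ = ENNReal.ofReal (2 ^ (p / 2)) * ∫⁻ x, carlesonKernel (p / 2) (1 - ‖a‖) x
          ∂(μ.restrict (Ico 0 1)).map (fun t => 1 - t) := by
        rw [lintegral_map (by fun_prop) (by fun_prop), lintegral_const_mul _ (by fun_prop)]
    _ ≤ K := mul_le_mul_right (lintegral_carlesonKernel_le
          (fun R hR => map_one_sub_restrict_Ico_Ioc_le hcar hR)
          (abs_le.2 ⟨by linarith, by linarith⟩) (by linarith)) _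
end
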